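/- arXiv:2301.12187 — 2 statements merged into one kernel-verified Lean document; each statement's English description precedes it below -/
import Mathlib

section
/- Let 0 < k < l be natural numbers, let t ∈ ℝ, and let S be a finite set with S ⊆ {1, …, l−1}, k ∈ S, and chainSum T ({0} ∪ S ∪ {l}) < t. Then chainSum T ({0} ∪ {s ∈ S : s < k} ∪ {k}) < t − T_opt(k, l). -/
noncomputable section

/-- Chain sum of `f` over the consecutive pairs of the elements of `P` in increasing order. -/
def chainSum (f : ℕ → ℕ → ℝ) (P : Finset ℕ) : ℝ :=
  (List.zipWith f (P.sort (· ≤ ·)) (P.sort (· ≤ ·)).tail).sum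

/-- Optimal latency `T_opt(k,l)`: the minimum of `chainSum T ({k} ∪ S ∪ {l})`
over all finite sets `S ⊆ {k+1,…,l−1}`. -/
def Topt (T : ℕ → ℕ → ℝ) (k l : ℕ) : ℝ :=
  ((Finset.Ioo k l).powerset.image (fun S => chainSum T ({k} ∪ S ∪ {l}))).min'
    ((Finset.powerset_nonempty _).image _)

/-! Since `k ∈ S`, the sorted chain `0 < ⋯ < k < ⋯ < l` splits at `k` into a chain from `0` to `k`
and a chain from `k` to `l` through elements of `Ioo k l`; the cost of the latter is at least
`T_opt(k, l)`. -/

theorem List.sum_zipWith_tail_append_cons {α M : Type*} [AddCommMonoid M] (f : α → α → M)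
    (x : α) (B : List α) : ∀ A : List α,
    (zipWith f (A ++ x :: B) (A ++ x :: B).tail).sum
      = (zipWith f (A ++ [x]) (A ++ [x]).tail).sum + (zipWith f (x :: B) B).sum
  | [] => by simp
  | [a] => by simp
  | a :: c :: A => by
    have ih := sum_zipWith_tail_append_cons f x B (c :: A)
    simp only [cons_append, tail_cons, zipWith_cons_cons, sum_cons] at ih ⊢
    rw [ih, add_assoc]

theorem Finset.sort_union_of_forall_lt {α : Type*} [LinearOrder α] {A B : Finset α}
    (h : ∀ a ∈ A, ∀ b ∈ B, a < b) : (A ∪ B).sort = A.sort ++ B.sort := by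
  have hnodup : (A.sort ++ B.sort).Nodup :=
    List.nodup_append.2 ⟨sort_nodup _ _, sort_nodup _ _, fun a ha b hb =>
      (h a (mem_sort _ |>.1 ha) b (mem_sort _ |>.1 hb)).ne⟩
  have hsorted : (A.sort ++ B.sort).Pairwise (· ≤ ·) :=
    List.pairwise_append.2 ⟨pairwise_sort _ _, pairwise_sort _ _, fun a ha b hb =>
      (h a (mem_sort _ |>.1 ha) b (mem_sort _ |>.1 hb)).le⟩
  have hset : (A.sort ++ B.sort).toFinset = A ∪ B := by
    rw [List.toFinset_append, sort_toFinset, sort_toFinset]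
  rw [← hset]
  exact (List.toFinset_sort _ hnodup).2 hsorted

theorem chainSum_union_singleton_union (f : ℕ → ℕ → ℝ) {A B : Finset ℕ} {x : ℕ}
    (hA : ∀ a ∈ A, a < x) (hB : ∀ b ∈ B, x < b) :
    chainSum f (A ∪ {x} ∪ B) = chainSum f (A ∪ {x}) + chainSum f ({x} ∪ B) := by
  have hAx : ∀ a ∈ A ∪ {x}, ∀ b ∈ B, a < b := by
    intro a ha b hb
    rw [Finset.mem_union, Finset.mem_singleton] at ha
    rcases ha with ha | rfl
    exacts [(hA a ha).trans (hB b hb), hB b hb]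
  simp only [chainSum]
  rw [Finset.sort_union_of_forall_lt hAx,
    Finset.sort_union_of_forall_lt (B := {x}) (by simpa using hA),
    Finset.sort_union_of_forall_lt (A := {x}) (by simpa using hB), Finset.sort_singleton,
    List.append_assoc, List.singleton_append]
  exact List.sum_zipWith_tail_append_cons f x _ _

theorem Topt_le_chainSum (T : ℕ → ℕ → ℝ) {k l : ℕ} {U : Finset ℕ} (hU : U ⊆ Finset.Ioo k l) :
    Topt T k l ≤ chainSum T ({k} ∪ U ∪ {l}) :=
  Finset.min'_le _ _ (Finset.mem_image_of_mem _ (Finset.mem_powerset.2 hU))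

/-- If a feasible merge pattern `S` contains `k`, then its part below `k` is feasible
for the remaining budget `t − T_opt(k,l)`. -/
theorem prefix_feasible (T : ℕ → ℕ → ℝ) (k l : ℕ) (hk : 0 < k) (hkl : k < l) (t : ℝ)
    (S : Finset ℕ) (hS : S ⊆ Finset.Ioo 0 l) (hkS : k ∈ S)
    (h : chainSum T ({0} ∪ S ∪ {l}) < t) :
    chainSum T ({0} ∪ S.filter (fun s => s < k) ∪ {k}) < t - Topt T k l := by
  have hlt : ∀ s ∈ S, s < l := fun s hs => (Finset.mem_Ioo.1 (hS hs)).2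
  have hsplit : {0} ∪ S ∪ {l} =
      ({0} ∪ S.filter (· < k)) ∪ {k} ∪ (S.filter (k < ·) ∪ {l}) := by
    ext s
    simp only [Finset.mem_union, Finset.mem_singleton, Finset.mem_filter]
    grind
  have hsum := chainSum_union_singleton_union T (A := {0} ∪ S.filter (· < k))
    (B := S.filter (k < ·) ∪ {l}) (x := k) (by grind) (by grind)
  have hopt : Topt T k l ≤ chainSum T ({k} ∪ (S.filter (k < ·) ∪ {l})) := by
    rw [← Finset.union_assoc]
    exact Topt_le_chainSum T fun s hs => by grind
  rw [hsplit, hsum] at h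
  linarith
end
end

section
/- Define the value function D by D(0, t) := 0 for all t ∈ ℝ, and for l ≥ 1 and t > T_opt(0, l), D(l, t) := the maximum of chainSum I ({0} ∪ A ∪ {l}) over all feasible pairs (A, S) of problem P(l, t). Then for every l ≥ 1 and every t > T_opt(0, l), D satisfies the Bellman equation D(l, t) = max over k ∈ {0, …, l−1} with T_opt(0, k) + T_opt(k, l) < t of (D(k, t − T_opt(k, l)) + I(k, l)), where the maximization set is nonempty (it contains k = 0) and each occurring value D(k, t − T_opt(k, l)) is well defined since T_opt(0, k) < t − T_opt(k, l). -/
noncomputable section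

/-!
Cut a feasible pair `(A, S)` of `P(l, t)` at the last point `k < l` of `{0} ∪ A`. The `T`-chain
of `S` beyond `k` costs at least `T_opt(k, l)`, so the part below `k` is feasible for
`P(k, t - T_opt(k, l))`, while the `I`-chain splits as a value of that problem plus `I(k, l)`.
Conversely, a feasible pair of `P(k, t - T_opt(k, l))`, extended by `k` and an optimal `T`-chain
from `k` to `l`, is feasible for `P(l, t)` with value increased by `I(k, l)`. Both directions rest
on the additivity of `chainSum` over two sets that meet in a single point lying above the one set
and below the other.
-/

open Finset

def listChain (f : ℕ → ℕ → ℝ) (L : List ℕ) : ℝ :=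
  (List.zipWith f L L.tail).sum

lemma listChain_append_cons (f : ℕ → ℕ → ℝ) (L₁ : List ℕ) (k : ℕ) (L₂ : List ℕ) :
    listChain f (L₁ ++ k :: L₂) = listChain f (L₁ ++ [k]) + listChain f (k :: L₂) := by
  induction L₁ with
  | nil => simp [listChain]
  | cons a L₁ ih =>
    cases L₁ with
    | nil => simp [listChain]
    | cons b L₁ =>
      simp only [List.cons_append, listChain, List.tail_cons, List.zipWith_cons_cons,
        List.sum_cons] at ih ⊢
      linarith

lemma sort_union_insert_of_lt {α : Type*} [LinearOrder α] {P Q : Finset α} {k : α}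
    (hP : ∀ x ∈ P, x < k) (hQ : ∀ x ∈ Q, k < x) :
    (P ∪ insert k Q).sort = P.sort ++ k :: Q.sort := by
  have hlt : (P.sort ++ k :: Q.sort).Pairwise (· < ·) := by
    simp only [List.pairwise_append, List.pairwise_cons, List.mem_cons, mem_sort]
    refine ⟨(sortedLT_sort P).pairwise, ⟨hQ, (sortedLT_sort Q).pairwise⟩, ?_⟩
    rintro a ha b (rfl | hb)
    exacts [hP a ha, (hP a ha).trans (hQ b hb)]
  rw [← (List.toFinset_sort _ hlt.nodup).mpr (hlt.imp le_of_lt)]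
  ext x
  simp

lemma chainSum_eq_listChain (f : ℕ → ℕ → ℝ) (P : Finset ℕ) :
    chainSum f P = listChain f P.sort := rfl

lemma chainSum_union {f : ℕ → ℕ → ℝ} {P Q : Finset ℕ} {k : ℕ}
    (hP : ∀ x ∈ P, x ≤ k) (hQ : ∀ x ∈ Q, k ≤ x) (hkP : k ∈ P) (hkQ : k ∈ Q) :
    chainSum f (P ∪ Q) = chainSum f P + chainSum f Q := by
  have hP' : ∀ x ∈ P.erase k, x < k := fun x hx =>
    lt_of_le_of_ne (hP x (mem_of_mem_erase hx)) (ne_of_mem_erase hx)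
  have hQ' : ∀ x ∈ Q.erase k, k < x := fun x hx =>
    lt_of_le_of_ne (hQ x (mem_of_mem_erase hx)) (ne_of_mem_erase hx).symm
  have hPk : P.erase k ∪ insert k ∅ = P := by simp [insert_erase hkP]
  have hQk : ∅ ∪ insert k (Q.erase k) = Q := by simp [insert_erase hkQ]
  have hPQ : P.erase k ∪ insert k (Q.erase k) = P ∪ Q := by
    rw [insert_erase hkQ]
    ext x
    by_cases x = k <;> simp_all
  calc chainSum f (P ∪ Q)
      = listChain f ((P.erase k).sort ++ k :: (Q.erase k).sort) := by
        rw [← hPQ, chainSum_eq_listChain, sort_union_insert_of_lt hP' hQ']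
    _ = listChain f ((P.erase k).sort ++ [k]) + listChain f (k :: (Q.erase k).sort) :=
        listChain_append_cons f _ k _
    _ = chainSum f P + chainSum f Q := by
        rw [← hPk, ← hQk, chainSum_eq_listChain, chainSum_eq_listChain,
          sort_union_insert_of_lt hP' (by simp), sort_union_insert_of_lt (by simp) hQ']
        simp

lemma chainSum_eq_add_of_mem (f : ℕ → ℕ → ℝ) {P : Finset ℕ} {k : ℕ} (hk : k ∈ P) :
    chainSum f P = chainSum f {x ∈ P | x ≤ k} + chainSum f {x ∈ P | k ≤ x} := by
  have hP : P = {x ∈ P | x ≤ k} ∪ {x ∈ P | k ≤ x} := by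
    ext x
    by_cases hx : x ∈ P <;> simp [hx, le_total]
  conv_lhs => rw [hP]
  exact chainSum_union (k := k) (by simp +contextual) (by simp +contextual) (by simp [hk])
    (by simp [hk])

lemma chainSum_singleton (f : ℕ → ℕ → ℝ) (a : ℕ) : chainSum f {a} = 0 := by
  simp [chainSum_eq_listChain, listChain]

lemma chainSum_pair (f : ℕ → ℕ → ℝ) {a b : ℕ} (h : a < b) : chainSum f {a, b} = f a b := by
  rw [chainSum_eq_listChain, sort_insert _ (by simpa using h.le) (by simpa using h.ne)]
  simp [listChain]

lemma union_Ioo_union_subset_Icc {α : Type*} [LinearOrder α] [LocallyFiniteOrder α]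
    {S : Finset α} {a b : α} (hab : a ≤ b) (hS : S ⊆ Ioo a b) :
    {a} ∪ S ∪ {b} ⊆ Icc a b := by
  intro x
  simp only [mem_union, mem_singleton, mem_Icc]
  rintro ((rfl | hx) | rfl)
  · exact ⟨le_rfl, hab⟩
  · exact Ioo_subset_Icc_self (hS hx) |> mem_Icc.mp
  · exact ⟨hab, le_rfl⟩

lemma union_inter_Ioo_union {α : Type*} [LinearOrder α] [LocallyFiniteOrder α]
    {P : Finset α} {a b : α} (hP : P ⊆ Icc a b) (ha : a ∈ P)
    (hb : b ∈ P) : {a} ∪ P ∩ Ioo a b ∪ {b} = P := by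
  ext x
  simp only [mem_union, mem_singleton, mem_inter, mem_Ioo]
  constructor
  · rintro ((rfl | ⟨hx, -⟩) | rfl) <;> assumption
  · intro hx
    obtain ⟨hax, hxb⟩ := mem_Icc.mp (hP hx)
    rcases hax.eq_or_lt with rfl | hax
    · exact Or.inl (Or.inl rfl)
    rcases hxb.eq_or_lt with rfl | hxb
    · exact Or.inr rfl
    exact Or.inl (Or.inr ⟨hx, hax, hxb⟩)

lemma Topt_le_chainSum_s9 (T : ℕ → ℕ → ℝ) {k l : ℕ} {Q : Finset ℕ} (hQ : Q ⊆ Icc k l)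
    (hk : k ∈ Q) (hl : l ∈ Q) : Topt T k l ≤ chainSum T Q := by
  rw [← union_inter_Ioo_union hQ hk hl]
  exact min'_le _ _ (mem_image_of_mem _ (mem_powerset.mpr inter_subset_right))

lemma exists_chainSum_eq_Topt (T : ℕ → ℕ → ℝ) {k l : ℕ} (hkl : k ≤ l) :
    ∃ Q ⊆ Icc k l, k ∈ Q ∧ l ∈ Q ∧ chainSum T Q = Topt T k l := by
  obtain ⟨S, hS, hST⟩ := mem_image.mp (min'_mem _ _ : Topt T k l ∈ _)
  exact ⟨{k} ∪ S ∪ {l}, union_Ioo_union_subset_Icc hkl (mem_powerset.mp hS), by simp, by simp,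
    hST⟩

lemma Topt_self (T : ℕ → ℕ → ℝ) (k : ℕ) : Topt T k k = 0 := by
  simp [Topt, chainSum_singleton]

section Bellman

variable (T I : ℕ → ℕ → ℝ)

/-- The values `chainSum I ({0} ∪ A ∪ {l})` of the feasible pairs `(A, S)` of `P(l, t)`. -/
def feasibleRewards (l : ℕ) (t : ℝ) : Set ℝ :=
  {x | ∃ A S : Finset ℕ, A ⊆ S ∧ S ⊆ Ioo 0 l ∧ chainSum T ({0} ∪ S ∪ {l}) < t ∧
    x = chainSum I ({0} ∪ A ∪ {l})}

variable {T I}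

-- With the endpoints included in the chains, the case `l = 0` needs no special treatment.
lemma mem_feasibleRewards_iff {l : ℕ} {t x : ℝ} :
    x ∈ feasibleRewards T I l t ↔ ∃ P Q : Finset ℕ, P ⊆ Q ∧ Q ⊆ Icc 0 l ∧ 0 ∈ P ∧ l ∈ P ∧
      chainSum T Q < t ∧ x = chainSum I P := by
  constructor
  · rintro ⟨A, S, hAS, hS, hT, rfl⟩
    exact ⟨_, _, by gcongr, union_Ioo_union_subset_Icc (Nat.zero_le l) hS, by simp, by simp,
      hT, rfl⟩
  · rintro ⟨P, Q, hPQ, hQ, h0, hl, hT, rfl⟩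
    refine ⟨P ∩ Ioo 0 l, Q ∩ Ioo 0 l, inter_subset_inter_right hPQ, inter_subset_right, ?_, ?_⟩
    · rwa [union_inter_Ioo_union hQ (hPQ h0) (hPQ hl)]
    · rw [union_inter_Ioo_union (hPQ.trans hQ) h0 hl]

lemma Topt_lt_of_mem_feasibleRewards {l : ℕ} {t x : ℝ} (hx : x ∈ feasibleRewards T I l t) :
    Topt T 0 l < t := by
  obtain ⟨P, Q, hPQ, hQ, h0, hl, hT, -⟩ := mem_feasibleRewards_iff.mp hx
  exact (Topt_le_chainSum_s9 T hQ (hPQ h0) (hPQ hl)).trans_lt hT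

lemma feasibleRewards_zero {t : ℝ} (ht : 0 < t) : feasibleRewards T I 0 t = {0} := by
  ext x
  simp [feasibleRewards, chainSum_singleton, ht]

lemma add_mem_feasibleRewards {k l : ℕ} {t x : ℝ} (hkl : k < l)
    (hx : x ∈ feasibleRewards T I k (t - Topt T k l)) : x + I k l ∈ feasibleRewards T I l t := by
  obtain ⟨P, Q, hPQ, hQ, h0, hk, hT, rfl⟩ := mem_feasibleRewards_iff.mp hx
  obtain ⟨R, hR, hkR, hlR, hRT⟩ := exists_chainSum_eq_Topt T hkl.le
  have hQk : ∀ y ∈ Q, y ≤ k := fun y hy => (mem_Icc.mp (hQ hy)).2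
  have hRk : ∀ y ∈ R, k ≤ y := fun y hy => (mem_Icc.mp (hR hy)).1
  refine mem_feasibleRewards_iff.mpr ⟨P ∪ {k, l}, Q ∪ R,
    union_subset_union hPQ (by simp [insert_subset_iff, hkR, hlR]),
    union_subset (hQ.trans (Icc_subset_Icc le_rfl hkl.le))
      (hR.trans (Icc_subset_Icc (Nat.zero_le k) le_rfl)),
    by simp [h0], by simp, ?_, ?_⟩
  · rw [chainSum_union hQk hRk (hPQ hk) hkR]
    linarith
  · rw [chainSum_union (fun y hy => hQk y (hPQ hy)) (by simp [hkl.le]) hk (by simp),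
      chainSum_pair I hkl]

lemma exists_mem_feasibleRewards_eq_add {l : ℕ} {t x : ℝ} (hl : 0 < l)
    (hx : x ∈ feasibleRewards T I l t) :
    ∃ k < l, ∃ y ∈ feasibleRewards T I k (t - Topt T k l), x = y + I k l := by
  obtain ⟨P, Q, hPQ, hQ, h0, hlP, hT, rfl⟩ := mem_feasibleRewards_iff.mp hx
  have hne : (P.erase l).Nonempty := ⟨0, mem_erase.mpr ⟨hl.ne, h0⟩⟩
  set k := (P.erase l).max' hne
  have hkP : k ∈ P := mem_of_mem_erase (max'_mem _ _)
  have hkl : k < l :=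
    lt_of_le_of_ne (mem_Icc.mp (hQ (hPQ hkP))).2 (ne_of_mem_erase (max'_mem _ hne))
  have hPk : {x ∈ P | k ≤ x} = {k, l} := by
    ext x
    simp only [mem_filter, mem_insert, mem_singleton]
    constructor
    · rintro ⟨hx, hkx⟩
      by_cases hxl : x = l
      · exact Or.inr hxl
      · exact Or.inl (le_antisymm (le_max' _ x (mem_erase.mpr ⟨hxl, hx⟩)) hkx)
    · rintro (rfl | rfl)
      exacts [⟨hkP, le_rfl⟩, ⟨hlP, hkl.le⟩]
  have hQsplit := chainSum_eq_add_of_mem T (hPQ hkP)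
  have hQk : {x ∈ Q | x ≤ k} ⊆ Icc 0 k := fun x hx =>
    mem_Icc.mpr ⟨Nat.zero_le x, (mem_filter.mp hx).2⟩
  have hkQ : {x ∈ Q | k ≤ x} ⊆ Icc k l := fun x hx =>
    mem_Icc.mpr ⟨(mem_filter.mp hx).2, (mem_Icc.mp (hQ (mem_filter.mp hx).1)).2⟩
  have hTopt : Topt T k l ≤ chainSum T {x ∈ Q | k ≤ x} :=
    Topt_le_chainSum_s9 T hkQ (by simp [hPQ hkP]) (by simp [hPQ hlP, hkl.le])
  refine ⟨k, hkl, chainSum I {x ∈ P | x ≤ k}, mem_feasibleRewards_iff.mpr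
    ⟨_, _, filter_subset_filter _ hPQ, hQk, by simp [h0], by simp [hkP], ?_, rfl⟩, ?_⟩
  · linarith
  · rw [chainSum_eq_add_of_mem I hkP, hPk, chainSum_pair I hkl]

end Bellman

/-- Bellman equation for the value function `D` of problem `P(l,t)`. -/
theorem value_function_bellman (T I : ℕ → ℕ → ℝ) (D : ℕ → ℝ → ℝ)
    (hD0 : ∀ t : ℝ, D 0 t = 0)
    (hD : ∀ l, 1 ≤ l → ∀ t : ℝ, Topt T 0 l < t →
      IsGreatest {x : ℝ | ∃ A S : Finset ℕ, A ⊆ S ∧ S ⊆ Finset.Ioo 0 l ∧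
        chainSum T ({0} ∪ S ∪ {l}) < t ∧ x = chainSum I ({0} ∪ A ∪ {l})} (D l t)) :
    ∀ l, 1 ≤ l → ∀ t : ℝ, Topt T 0 l < t →
      (Topt T 0 0 + Topt T 0 l < t) ∧
      (∀ k, k < l → Topt T 0 k + Topt T k l < t → Topt T 0 k < t - Topt T k l) ∧
      IsGreatest {x : ℝ | ∃ k, k < l ∧ Topt T 0 k + Topt T k l < t ∧
        x = D k (t - Topt T k l) + I k l} (D l t) := by
  have hvalue : ∀ k t, Topt T 0 k < t → IsGreatest (feasibleRewards T I k t) (D k t) := by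
    intro k t ht
    rcases Nat.eq_zero_or_pos k with rfl | hk
    · rw [Topt_self] at ht
      rw [hD0, feasibleRewards_zero ht]
      exact isGreatest_singleton
    · exact hD k hk t ht
  intro l hl t ht
  have hsub : ∀ k, Topt T 0 k + Topt T k l < t → Topt T 0 k < t - Topt T k l :=
    fun k hk => by linarith
  have hle : ∀ k < l, Topt T 0 k + Topt T k l < t → D k (t - Topt T k l) + I k l ≤ D l t :=
    fun k hkl hkt => (hD l hl t ht).2 (add_mem_feasibleRewards hkl (hvalue k _ (hsub k hkt)).1)
  refine ⟨by rwa [Topt_self, zero_add], fun k _ => hsub k, ?_,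
    fun _ ⟨k, hkl, hkt, hx⟩ => hx ▸ hle k hkl hkt⟩
  obtain ⟨k, hkl, y, hy, hDy⟩ := exists_mem_feasibleRewards_eq_add hl (hD l hl t ht).1
  have hkt : Topt T 0 k + Topt T k l < t := by
    linarith [Topt_lt_of_mem_feasibleRewards hy]
  refine ⟨k, hkl, hkt, le_antisymm ?_ (hle k hkl hkt)⟩
  rw [hDy]
  gcongr
  exact (hvalue k _ (hsub k hkt)).2 hy
end
end
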